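/- Let G be a finite simple graph. If Staller has a winning strategy in the D-game (respectively, the S-game) of the Maker–Breaker domination game on G, then Staller also has a winning strategy in the D-game (respectively, the S-game) of the Maker–Breaker total domination game on G. Equivalently, if Dominator has a winning strategy in the D-game (respectively, the S-game) of the Maker–Breaker total domination game on G, then Dominator also has a winning strategy in the D-game (respectively, the S-game) of the Maker–Breaker domination game on G. -/

import Mathlib

/-! The two games have the same moves and differ only in their winning conditions, which are
nested: a total dominating set is dominating, and a vertex whose closed neighbourhood Staller owns
has its open neighbourhood owned by her as well. So any winning strategy transfers verbatim. -/

namespace MBTD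

variable {V : Type*} [Fintype V] [DecidableEq V]

/-- `a` is a total dominating set of `G`: every vertex has a neighbour in `a`. -/
def IsTotalDomSet (G : SimpleGraph V) (a : Finset V) : Prop :=
  ∀ v : V, ∃ u ∈ a, G.Adj u v

/-- `WinsAux win n turn a b` describes the generic positional game in which two players
alternately claim previously unclaimed vertices until every vertex is claimed.
Here `a` is the set of vertices claimed so far by the tracked player, `b` the set claimed by
the opponent, `turn = true` iff the tracked player is the next to move, and `n` is the number
of moves still to be played.  The tracked player wins iff `win` holds of the final position. -/
def WinsAux (win : Finset V → Finset V → Prop) : ℕ → Bool → Finset V → Finset V → Prop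
  | 0, _, a, b => win a b
  | n + 1, true, a, b => ∃ v ∈ Finset.univ \ (a ∪ b), WinsAux win n false (insert v a) b
  | n + 1, false, a, b => ∀ v ∈ Finset.univ \ (a ∪ b), WinsAux win n true a (insert v b)

/-- Dominator has a winning strategy in the Maker-Breaker total domination game on `G`,
where `dFirst = true` means Dominator moves first (the D-game) and `dFirst = false` means
Staller moves first (the S-game).  Dominator wins iff the set of vertices he has claimed at
the end of the game is a total dominating set of `G`. -/
def DominatorWinsMBTD (G : SimpleGraph V) (dFirst : Bool) : Prop :=
  WinsAux (fun a _ => IsTotalDomSet G a) (Fintype.card V) dFirst ∅ ∅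

/-- Staller has a winning strategy in the Maker-Breaker total domination game on `G`,
where `dFirst = true` means Dominator moves first (the D-game) and `dFirst = false` means
Staller moves first (the S-game).  Staller wins iff she claims every vertex of the open
neighbourhood of some vertex. -/
def StallerWinsMBTD (G : SimpleGraph V) (dFirst : Bool) : Prop :=
  WinsAux (fun a _ => ∃ v : V, ∀ u : V, G.Adj u v → u ∈ a) (Fintype.card V) (!dFirst) ∅ ∅

/-- `G` is a `𝒟` graph: Dominator wins both the D-game and the S-game. -/
def IsD (G : SimpleGraph V) : Prop :=
  DominatorWinsMBTD G true ∧ DominatorWinsMBTD G false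

/-- `G` is an `𝒮` graph: Staller wins both the D-game and the S-game. -/
def IsS (G : SimpleGraph V) : Prop :=
  StallerWinsMBTD G true ∧ StallerWinsMBTD G false

/-- `G` is an `𝒩` graph: whichever player moves first wins. -/
def IsN (G : SimpleGraph V) : Prop :=
  DominatorWinsMBTD G true ∧ StallerWinsMBTD G false

/-- `a` is a dominating set of `G`: every vertex not in `a` has a neighbour in `a`. -/
def IsDomSet {V : Type*} (G : SimpleGraph V) (a : Finset V) : Prop :=
  ∀ v : V, v ∈ a ∨ ∃ u ∈ a, G.Adj u v

/-- Dominator has a winning strategy in the Maker-Breaker domination game on `G`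
(`dFirst = true` for the D-game): he wins iff his final claimed set is a dominating set. -/
def DominatorWinsMBD {V : Type*} [Fintype V] [DecidableEq V]
    (G : SimpleGraph V) (dFirst : Bool) : Prop :=
  WinsAux (fun a _ => IsDomSet G a) (Fintype.card V) dFirst ∅ ∅

/-- Staller has a winning strategy in the Maker-Breaker domination game on `G`
(`dFirst = true` for the D-game): she wins iff she claims every vertex of the closed
neighbourhood of some vertex. -/
def StallerWinsMBD {V : Type*} [Fintype V] [DecidableEq V]
    (G : SimpleGraph V) (dFirst : Bool) : Prop :=
  WinsAux (fun a _ => ∃ v : V, v ∈ a ∧ ∀ u : V, G.Adj u v → u ∈ a)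
    (Fintype.card V) (!dFirst) ∅ ∅

theorem WinsAux.mono {win win' : Finset V → Finset V → Prop} (h : ∀ a b, win a b → win' a b) :
    ∀ {n t a b}, WinsAux win n t a b → WinsAux win' n t a b
  | 0, _, a, b, hw => h a b hw
  | _ + 1, true, _, _, ⟨v, hv, hw⟩ => ⟨v, hv, WinsAux.mono h hw⟩
  | _ + 1, false, _, _, hw => fun v hv => WinsAux.mono h (hw v hv)

theorem StallerWinsMBD.stallerWinsMBTD {G : SimpleGraph V} {dFirst : Bool}
    (h : StallerWinsMBD G dFirst) : StallerWinsMBTD G dFirst :=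
  WinsAux.mono (fun _ _ ⟨v, _, hv⟩ => ⟨v, hv⟩) h

theorem DominatorWinsMBTD.dominatorWinsMBD {G : SimpleGraph V} {dFirst : Bool}
    (h : DominatorWinsMBTD G dFirst) : DominatorWinsMBD G dFirst :=
  WinsAux.mono (fun _ _ hdom v => Or.inr (hdom v)) h

/-- if Staller wins the MBD game (D-game resp. S-game) on `G` then she wins the
MBTD game there as well; equivalently, if Dominator wins the MBTD game then he wins the MBD
game. -/
theorem stmt2 {V : Type*} [Fintype V] [DecidableEq V] (G : SimpleGraph V) (dFirst : Bool) :
    (StallerWinsMBD G dFirst → StallerWinsMBTD G dFirst) ∧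
    (DominatorWinsMBTD G dFirst → DominatorWinsMBD G dFirst) :=
  ⟨StallerWinsMBD.stallerWinsMBTD, DominatorWinsMBTD.dominatorWinsMBD⟩

end MBTD
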